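/- Let a_0,…,a_n be pairwise distinct reals. The Moser (Jacobi–Moser) functions F_α(P,Q) = P_α² + Σ_{β≠α} (P_α Q_β − P_β Q_α)²/(a_α − a_β), α = 0,…,n, pairwise Poisson-commute on ℝ^{n+1} × ℝ^{n+1}: {F_α, F_β} = 0 for all α, β ∈ {0,…,n}. -/

import Mathlib

open Finset

/-- Partial derivative with respect to the momentum variable `P α`. -/
noncomputable def pderivP {m : ℕ} (F : (Fin m → ℝ) → (Fin m → ℝ) → ℝ)
    (α : Fin m) (p q : Fin m → ℝ) : ℝ :=
  deriv (fun t => F (Function.update p α t) q) (p α)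

/-- Partial derivative with respect to the position variable `Q α`. -/
noncomputable def pderivQ {m : ℕ} (F : (Fin m → ℝ) → (Fin m → ℝ) → ℝ)
    (α : Fin m) (p q : Fin m → ℝ) : ℝ :=
  deriv (fun t => F p (Function.update q α t)) (q α)

/-- Canonical Poisson bracket on `ℝ^m × ℝ^m`. -/
noncomputable def pbracket {m : ℕ} (F G : (Fin m → ℝ) → (Fin m → ℝ) → ℝ)
    (p q : Fin m → ℝ) : ℝ :=
  ∑ α, (pderivP F α p q * pderivQ G α p q - pderivQ F α p q * pderivP G α p q)

/-- The Moser (Jacobi–Moser) first integrals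
`F_α(P,Q) = P_α² + Σ_{β≠α} (P_α Q_β − P_β Q_α)²/(a_α − a_β)`. -/
noncomputable def moser {m : ℕ} (a : Fin m → ℝ) (α : Fin m)
    (P Q : Fin m → ℝ) : ℝ :=
  (P α) ^ 2 + ∑ β ∈ univ \ {α}, (P α * Q β - P β * Q α) ^ 2 / (a α - a β)

def MM {m : ℕ} (P Q : Fin m → ℝ) (i j : Fin m) : ℝ := P i * Q j - P j * Q i

lemma pderivP_moser_self {m : ℕ} (a P Q : Fin m → ℝ) (α : Fin m) :
    pderivP (moser a α) α P Q
      = 2 * P α + ∑ δ ∈ univ \ {α}, 2 * MM P Q α δ * Q δ / (a α - a δ) := by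
  have hfun : (fun t => moser a α (Function.update P α t) Q)
      = fun t => t ^ 2 + ∑ δ ∈ univ \ {α}, (t * Q δ - P δ * Q α) ^ 2 / (a α - a δ) := by
    funext t
    unfold moser
    rw [Function.update_self]
    congr 1
    refine Finset.sum_congr rfl fun δ hδ => ?_
    rw [Function.update_of_ne (by simpa using (Finset.mem_sdiff.mp hδ).2)]
  unfold pderivP
  rw [hfun]
  have h1 : HasDerivAt (fun t : ℝ => t ^ 2) (2 * P α) (P α) := by
    simpa using hasDerivAt_pow 2 (P α)
  have h2 : HasDerivAt
      (fun t : ℝ => ∑ δ ∈ univ \ {α}, (t * Q δ - P δ * Q α) ^ 2 / (a α - a δ))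
      (∑ δ ∈ univ \ {α}, 2 * MM P Q α δ * Q δ / (a α - a δ)) (P α) := by
    refine HasDerivAt.fun_sum fun δ _ => ?_
    have h := ((((hasDerivAt_id' (P α)).mul_const (Q δ)).sub_const (P δ * Q α)).pow 2).div_const
      (a α - a δ)
    refine h.congr_deriv ?_
    simp [MM]
    all_goals ring
  exact (h1.add h2).deriv

lemma pderivP_moser_ne {m : ℕ} (a P Q : Fin m → ℝ) {α γ : Fin m} (h : γ ≠ α) :
    pderivP (moser a α) γ P Q = -2 * MM P Q α γ * Q α / (a α - a γ) := by
  have hγ : γ ∈ univ \ {α} := by simp [h]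
  have hfun : (fun t => moser a α (Function.update P γ t) Q)
      = fun t => (P α ^ 2 + ∑ δ ∈ (univ \ {α}) \ {γ}, (P α * Q δ - P δ * Q α) ^ 2 / (a α - a δ))
          + (P α * Q γ - t * Q α) ^ 2 / (a α - a γ) := by
    funext t
    unfold moser
    rw [Function.update_of_ne (Ne.symm h)]
    rw [Finset.sum_eq_sum_sdiff_singleton_add hγ]
    rw [Function.update_self, ← add_assoc]
    congr 2
    refine Finset.sum_congr rfl fun δ hδ => ?_
    rw [Function.update_of_ne (by simpa using (Finset.mem_sdiff.mp hδ).2)]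
  unfold pderivP
  rw [hfun]
  have h2 : HasDerivAt (fun t : ℝ => (P α * Q γ - t * Q α) ^ 2 / (a α - a γ))
      (-2 * MM P Q α γ * Q α / (a α - a γ)) (P γ) := by
    have h := ((((hasDerivAt_id' (P γ)).mul_const (Q α)).const_sub (P α * Q γ)).pow 2).div_const
      (a α - a γ)
    refine h.congr_deriv ?_
    simp [MM]
    all_goals ring
  have h3 := (((hasDerivAt_const (P γ) (P α ^ 2 + ∑ δ ∈ (univ \ {α}) \ {γ}, (P α * Q δ - P δ * Q α) ^ 2 / (a α - a δ)))).add h2).deriv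
  rw [zero_add] at h3
  exact h3

lemma pderivQ_moser_self {m : ℕ} (a P Q : Fin m → ℝ) (α : Fin m) :
    pderivQ (moser a α) α P Q
      = ∑ δ ∈ univ \ {α}, -2 * MM P Q α δ * P δ / (a α - a δ) := by
  have hfun : (fun t => moser a α P (Function.update Q α t))
      = fun t => P α ^ 2 + ∑ δ ∈ univ \ {α}, (P α * Q δ - P δ * t) ^ 2 / (a α - a δ) := by
    funext t
    unfold moser
    congr 1
    refine Finset.sum_congr rfl fun δ hδ => ?_
    rw [Function.update_self, Function.update_of_ne (by simpa using (Finset.mem_sdiff.mp hδ).2)]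
  unfold pderivQ
  rw [hfun]
  have h2 : HasDerivAt
      (fun t : ℝ => ∑ δ ∈ univ \ {α}, (P α * Q δ - P δ * t) ^ 2 / (a α - a δ))
      (∑ δ ∈ univ \ {α}, -2 * MM P Q α δ * P δ / (a α - a δ)) (Q α) := by
    refine HasDerivAt.fun_sum fun δ _ => ?_
    have h := (((((hasDerivAt_id' (Q α)).const_mul (P δ))).const_sub (P α * Q δ)).pow 2).div_const
      (a α - a δ)
    refine h.congr_deriv ?_
    simp [MM]
    all_goals ring
  have h3 := ((hasDerivAt_const (Q α) (P α ^ 2 : ℝ)).add h2).deriv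
  rw [zero_add] at h3
  exact h3

lemma pderivQ_moser_ne {m : ℕ} (a P Q : Fin m → ℝ) {α γ : Fin m} (h : γ ≠ α) :
    pderivQ (moser a α) γ P Q = 2 * MM P Q α γ * P α / (a α - a γ) := by
  have hγ : γ ∈ univ \ {α} := by simp [h]
  have hfun : (fun t => moser a α P (Function.update Q γ t))
      = fun t => (P α ^ 2 + ∑ δ ∈ (univ \ {α}) \ {γ}, (P α * Q δ - P δ * Q α) ^ 2 / (a α - a δ))
          + (P α * t - P γ * Q α) ^ 2 / (a α - a γ) := by
    funext t
    unfold moser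
    rw [Finset.sum_eq_sum_sdiff_singleton_add hγ]
    rw [Function.update_self, Function.update_of_ne (Ne.symm h), ← add_assoc]
    congr 2
    refine Finset.sum_congr rfl fun δ hδ => ?_
    rw [Function.update_of_ne (by simpa using (Finset.mem_sdiff.mp hδ).2)]
  unfold pderivQ
  rw [hfun]
  have h2 : HasDerivAt (fun t : ℝ => (P α * t - P γ * Q α) ^ 2 / (a α - a γ))
      (2 * MM P Q α γ * P α / (a α - a γ)) (Q γ) := by
    have h := ((((hasDerivAt_id' (Q γ)).const_mul (P α)).sub_const (P γ * Q α)).pow 2).div_const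
      (a α - a γ)
    refine h.congr_deriv ?_
    simp [MM]
    all_goals ring
  have h3 := (((hasDerivAt_const (Q γ) (P α ^ 2 + ∑ δ ∈ (univ \ {α}) \ {γ}, (P α * Q δ - P δ * Q α) ^ 2 / (a α - a δ)))).add h2).deriv
  rw [zero_add] at h3
  exact h3

lemma MM_self {m : ℕ} (P Q : Fin m → ℝ) (i : Fin m) : MM P Q i i = 0 := by simp [MM]

lemma sum_helper1 {ι : Type*} (s : Finset ι) (A c c' : ℝ) (x y : ι → ℝ) :
    (A + ∑ δ ∈ s, x δ) * c - (∑ δ ∈ s, y δ) * c'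
      = A * c + ∑ δ ∈ s, (x δ * c - y δ * c') := by
  rw [Finset.sum_sub_distrib, ← Finset.sum_mul, ← Finset.sum_mul]; ring

lemma sum_helper2 {ι : Type*} (s : Finset ι) (A c c' : ℝ) (x y : ι → ℝ) :
    c * (∑ δ ∈ s, y δ) - c' * (A + ∑ δ ∈ s, x δ)
      = (∑ δ ∈ s, (c * y δ - c' * x δ)) - c' * A := by
  rw [Finset.sum_sub_distrib, ← Finset.mul_sum, ← Finset.mul_sum]; ring

noncomputable def W1 {m : ℕ} (a P Q : Fin m → ℝ) (α β δ : Fin m) : ℝ :=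
  4 * MM P Q α β * MM P Q α δ * MM P Q β δ / ((a α - a β) * (a α - a δ))

noncomputable def W2 {m : ℕ} (a P Q : Fin m → ℝ) (α β δ : Fin m) : ℝ :=
  4 * MM P Q α β * MM P Q α δ * MM P Q β δ / ((a α - a β) * (a β - a δ))

/-- the Moser functions pairwise Poisson-commute on
`ℝ^{n+1} × ℝ^{n+1}`. -/
theorem moser_poisson_commute (n : ℕ) (hn : 1 ≤ n)
    (a : Fin (n + 1) → ℝ) (ha : Function.Injective a)
    (α β : Fin (n + 1)) (P Q : Fin (n + 1) → ℝ) :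
    pbracket (moser a α) (moser a β) P Q = 0 := by
  rcases eq_or_ne α β with rfl | hab
  · exact Finset.sum_eq_zero fun γ _ => by ring
  have hba : β ≠ α := hab.symm
  have haab : a α - a β ≠ 0 := sub_ne_zero.mpr (ha.ne hab)
  have haba : a β - a α ≠ 0 := sub_ne_zero.mpr (ha.ne hba)
  have hαmem : α ∉ insert β (univ \ ({α, β} : Finset (Fin (n + 1)))) := by simp [hab]
  have hβmem : β ∉ univ \ ({α, β} : Finset (Fin (n + 1))) := by simp
  have hU : (univ : Finset (Fin (n + 1)))
      = insert α (insert β (univ \ ({α, β} : Finset (Fin (n + 1))))) := by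
    ext x
    by_cases h1 : x = α <;> by_cases h2 : x = β <;> simp [h1, h2]
  -- closed form for the γ = α term
  have hA : pderivP (moser a α) α P Q * pderivQ (moser a β) α P Q
      - pderivQ (moser a α) α P Q * pderivP (moser a β) α P Q
      = 4 * P α * P β * MM P Q α β / (a α - a β)
        + ∑ δ ∈ univ \ ({α, β} : Finset (Fin (n + 1))), W1 a P Q α β δ := by
    rw [pderivP_moser_self, pderivQ_moser_self, pderivQ_moser_ne a P Q hab,
      pderivP_moser_ne a P Q hab, sum_helper1]
    have hβm : β ∈ univ \ ({α} : Finset (Fin (n + 1))) := by simp [hba]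
    rw [Finset.sum_eq_sum_sdiff_singleton_add hβm]
    have hset : (univ \ ({α} : Finset (Fin (n + 1)))) \ {β}
        = univ \ ({α, β} : Finset (Fin (n + 1))) := by
      ext x; simp [not_or, and_comm]
    rw [hset]
    have hterm : ∀ δ ∈ univ \ ({α, β} : Finset (Fin (n + 1))),
        2 * MM P Q α δ * Q δ / (a α - a δ) * (2 * MM P Q β α * P β / (a β - a α))
          - -2 * MM P Q α δ * P δ / (a α - a δ) * (-2 * MM P Q β α * Q β / (a β - a α))
          = W1 a P Q α β δ := by
      intro δ hδ
      have hm := (Finset.mem_sdiff.mp hδ).2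
      simp only [Finset.mem_insert, Finset.mem_singleton, not_or] at hm
      have hδα : δ ≠ α := hm.1
      have haad : a α - a δ ≠ 0 := sub_ne_zero.mpr (ha.ne hδα.symm)
      simp only [MM, W1]
      field_simp
      ring
    rw [Finset.sum_congr rfl hterm]
    have hz : 2 * MM P Q α β * Q β / (a α - a β) * (2 * MM P Q β α * P β / (a β - a α))
        - -2 * MM P Q α β * P β / (a α - a β) * (-2 * MM P Q β α * Q β / (a β - a α))
        = 0 := by
      simp only [MM]
      field_simp
      ring
    rw [hz]
    have hc : 2 * P α * (2 * MM P Q β α * P β / (a β - a α))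
        = 4 * P α * P β * MM P Q α β / (a α - a β) := by
      simp only [MM]; field_simp; ring
    rw [hc]
    ring
  -- closed form for the γ = β term
  have hB : pderivP (moser a α) β P Q * pderivQ (moser a β) β P Q
      - pderivQ (moser a α) β P Q * pderivP (moser a β) β P Q
      = (∑ δ ∈ univ \ ({α, β} : Finset (Fin (n + 1))), -W2 a P Q α β δ)
        - 4 * P α * P β * MM P Q α β / (a α - a β) := by
    rw [pderivP_moser_ne a P Q hba, pderivQ_moser_ne a P Q hba,
      pderivQ_moser_self, pderivP_moser_self]
    rw [show -2 * MM P Q α β * Q α / (a α - a β) * ∑ δ ∈ univ \ {β}, -2 * MM P Q β δ * P δ / (a β - a δ)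
        - 2 * MM P Q α β * P α / (a α - a β) * (2 * P β + ∑ δ ∈ univ \ {β}, 2 * MM P Q β δ * Q δ / (a β - a δ))
        = ((-2 * MM P Q α β * Q α / (a α - a β)) * (∑ δ ∈ univ \ {β}, -2 * MM P Q β δ * P δ / (a β - a δ))
          - (2 * MM P Q α β * P α / (a α - a β)) * (2 * P β + ∑ δ ∈ univ \ {β}, 2 * MM P Q β δ * Q δ / (a β - a δ))) from rfl,
      sum_helper2]
    have hαm : α ∈ univ \ ({β} : Finset (Fin (n + 1))) := by simp [hab]
    rw [Finset.sum_eq_sum_sdiff_singleton_add hαm]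
    have hset : (univ \ ({β} : Finset (Fin (n + 1)))) \ {α}
        = univ \ ({α, β} : Finset (Fin (n + 1))) := by
      ext x; simp [not_or, and_comm]
    rw [hset]
    have hterm : ∀ δ ∈ univ \ ({α, β} : Finset (Fin (n + 1))),
        -2 * MM P Q α β * Q α / (a α - a β) * (-2 * MM P Q β δ * P δ / (a β - a δ))
          - 2 * MM P Q α β * P α / (a α - a β) * (2 * MM P Q β δ * Q δ / (a β - a δ))
          = -W2 a P Q α β δ := by
      intro δ hδ
      have hm := (Finset.mem_sdiff.mp hδ).2
      simp only [Finset.mem_insert, Finset.mem_singleton, not_or] at hm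
      have hδβ : δ ≠ β := hm.2
      have habd : a β - a δ ≠ 0 := sub_ne_zero.mpr (ha.ne hδβ.symm)
      simp only [MM, W2]
      field_simp
      ring
    rw [Finset.sum_congr rfl hterm]
    have hz : -2 * MM P Q α β * Q α / (a α - a β) * (-2 * MM P Q β α * P α / (a β - a α))
        - 2 * MM P Q α β * P α / (a α - a β) * (2 * MM P Q β α * Q α / (a β - a α))
        = 0 := by
      simp only [MM]; field_simp; ring
    rw [hz]
    have hc : 2 * MM P Q α β * P α / (a α - a β) * (2 * P β)
        = 4 * P α * P β * MM P Q α β / (a α - a β) := by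
      simp only [MM]; field_simp; ring
    rw [hc]
    ring
  -- closed form for the γ ∉ {α, β} terms
  have hC : ∀ γ ∈ univ \ ({α, β} : Finset (Fin (n + 1))),
      pderivP (moser a α) γ P Q * pderivQ (moser a β) γ P Q
        - pderivQ (moser a α) γ P Q * pderivP (moser a β) γ P Q
        = W2 a P Q α β γ - W1 a P Q α β γ := by
    intro γ hγ
    have hm := (Finset.mem_sdiff.mp hγ).2
    simp only [Finset.mem_insert, Finset.mem_singleton, not_or] at hm
    have hγα : γ ≠ α := hm.1
    have hγβ : γ ≠ β := hm.2
    have haag : a α - a γ ≠ 0 := sub_ne_zero.mpr (ha.ne hγα.symm)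
    have habg : a β - a γ ≠ 0 := sub_ne_zero.mpr (ha.ne hγβ.symm)
    rw [pderivP_moser_ne a P Q hγα, pderivQ_moser_ne a P Q hγβ,
      pderivQ_moser_ne a P Q hγα, pderivP_moser_ne a P Q hγβ]
    simp only [MM, W1, W2]
    field_simp
    ring
  unfold pbracket
  rw [hU, Finset.sum_insert hαmem, Finset.sum_insert hβmem, hA, hB,
    Finset.sum_congr rfl hC, Finset.sum_sub_distrib, Finset.sum_neg_distrib]
  ring
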